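/- For every integer k > 2n, the element s_k/k of ℚ[z_1,…,z_n] lies in m³, the cube of the ideal m generated by e_1,…,e_n. -/

import Mathlib

/-!
Newton's identities `s_k = ±k e_k - ∑_{0<i<k} ±e_i s_{k-i}` show by strong induction that
every `s_k` with `k > 0` lies in `m`. For `k > n` the term `e_k` vanishes, as does every `e_i`
with `i > n`, so `s_k` is a combination of products `e_i s_{k-i}` with `1 ≤ i ≤ n`; hence if all
`s_j` with `j > c n` lie in `m^(c+1)`, then all `s_k` with `k > (c+1) n` lie in `m^(c+2)`.
With `c = 2` this puts `s_k` in `m³` for `k > 2n`, and `1/k` is a scalar since we work over `ℚ`.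
-/

namespace MvPolynomial

variable (σ R : Type*) [Fintype σ] [CommRing R]

noncomputable def esymmIdeal : Ideal (MvPolynomial σ R) :=
  Ideal.span (esymm σ R '' Set.Icc 1 (Fintype.card σ))

variable {σ R}

lemma esymm_eq_zero_of_card_lt {j : ℕ} (h : Fintype.card σ < j) : esymm σ R j = 0 := by
  rw [esymm, Finset.powersetCard_eq_empty.mpr (by simpa using h), Finset.sum_empty]

lemma esymm_mem_esymmIdeal {j : ℕ} (hj : 1 ≤ j) : esymm σ R j ∈ esymmIdeal σ R := by
  rcases le_or_gt j (Fintype.card σ) with hle | hlt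
  · exact Ideal.subset_span ⟨j, ⟨hj, hle⟩, rfl⟩
  · rw [esymm_eq_zero_of_card_lt hlt]
    exact Ideal.zero_mem _

lemma psum_mem_esymmIdeal {k : ℕ} (hk : 0 < k) : psum σ R k ∈ esymmIdeal σ R := by
  induction k using Nat.strong_induction_on with
  | _ k ih =>
    rw [psum_eq_mul_esymm_sub_sum σ R k hk]
    refine Ideal.sub_mem _ (Ideal.mul_mem_left _ _ (esymm_mem_esymmIdeal hk)) ?_
    refine Ideal.sum_mem _ fun a ha => Ideal.mul_mem_left _ _ (ih a.2 ?_ ?_)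
    all_goals
      simp only [Finset.mem_filter, Finset.HasAntidiagonal.mem_antidiagonal, Set.mem_Ioo] at ha
      omega

lemma psum_mem_esymmIdeal_mul {J : Ideal (MvPolynomial σ R)} {k : ℕ} (hk : Fintype.card σ < k)
    (hJ : ∀ j, k - Fintype.card σ ≤ j → j < k → psum σ R j ∈ J) :
    psum σ R k ∈ esymmIdeal σ R * J := by
  rw [psum_eq_mul_esymm_sub_sum σ R k (by omega), esymm_eq_zero_of_card_lt hk, mul_zero,
    zero_sub]
  refine neg_mem (Ideal.sum_mem _ fun a ha => ?_)
  simp only [Finset.mem_filter, Finset.HasAntidiagonal.mem_antidiagonal, Set.mem_Ioo] at ha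
  rcases le_or_gt a.1 (Fintype.card σ) with hle | hlt
  · rw [mul_assoc]
    exact Ideal.mul_mem_left _ _
      (Ideal.mul_mem_mul (esymm_mem_esymmIdeal (by omega)) (hJ a.2 (by omega) (by omega)))
  · rw [esymm_eq_zero_of_card_lt hlt, mul_zero, zero_mul]
    exact Ideal.zero_mem _

lemma psum_mem_esymmIdeal_pow_succ (c : ℕ) {k : ℕ} (hk : c * Fintype.card σ < k) :
    psum σ R k ∈ esymmIdeal σ R ^ (c + 1) := by
  induction c generalizing k with
  | zero => simpa using psum_mem_esymmIdeal (by simpa using hk)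
  | succ c ih =>
    rw [pow_succ']
    refine psum_mem_esymmIdeal_mul (by nlinarith) fun j hj _ => ih ?_
    rw [Nat.succ_mul] at hk
    omega

end MvPolynomial

open MvPolynomial in
/-- **Lemma.** In `ℚ[z_1,…,z_n]`, for every `k > 2n` the element `s_k / k` lies in `m³`,
where `s_k` is the `k`-th power sum and `m` is the ideal generated by the elementary
symmetric polynomials `e_1, …, e_n`. -/
theorem stmt_4 (n k : ℕ) (hk : 2 * n < k) :
    (k : ℚ)⁻¹ • psum (Fin n) ℚ k ∈
      (Ideal.span (esymm (Fin n) ℚ '' Set.Icc 1 n)) ^ 3 := by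
  have hm : Ideal.span (esymm (Fin n) ℚ '' Set.Icc 1 n) = esymmIdeal (Fin n) ℚ := by
    rw [esymmIdeal, Fintype.card_fin]
  rw [hm, smul_eq_C_mul]
  exact Ideal.mul_mem_left _ _ (psum_mem_esymmIdeal_pow_succ 2 (by simpa using hk))
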